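/- arXiv:2107.04416 — 4 statements merged into one kernel-verified Lean document; each statement's English description precedes it below -/
import Mathlib

section
/- Let f(w) = a₀w⁴ + 4a₁w³ + 6a₂w² + 4a₃w + a₄ with root w₀, and A₀ = a₀, A₁ = a₀w₀ + a₁, A₂ = a₀w₀² + 2a₁w₀ + a₂, A₃ = a₀w₀³ + 3a₁w₀² + 3a₂w₀ + a₃. Then the cubinvariant g₃ = a₀a₂a₄ + 2a₁a₂a₃ − a₂³ − a₀a₃² − a₁²a₄ satisfies g₃ = 2A₁A₂A₃ − A₂³ − A₀A₃². -/
theorem stmt_14 (a₀ a₁ a₂ a₃ a₄ w₀ : ℂ)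
    (hroot : a₀ * w₀^4 + 4 * a₁ * w₀^3 + 6 * a₂ * w₀^2 + 4 * a₃ * w₀ + a₄ = 0)
    (A₀ A₁ A₂ A₃ : ℂ)
    (hA₀ : A₀ = a₀)
    (hA₁ : A₁ = a₀ * w₀ + a₁)
    (hA₂ : A₂ = a₀ * w₀^2 + 2 * a₁ * w₀ + a₂)
    (hA₃ : A₃ = a₀ * w₀^3 + 3 * a₁ * w₀^2 + 3 * a₂ * w₀ + a₃) :
    a₀ * a₂ * a₄ + 2 * a₁ * a₂ * a₃ - a₂^3 - a₀ * a₃^2 - a₁^2 * a₄ =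
      2 * A₁ * A₂ * A₃ - A₂^3 - A₀ * A₃^2 := by
  have h : a₄ = -(a₀ * w₀^4 + 4 * a₁ * w₀^3 + 6 * a₂ * w₀^2 + 4 * a₃ * w₀) := by
    linear_combination hroot
  subst hA₀ hA₁ hA₂ hA₃ h
  ring
end

section
/- Let f be a quartic with simple root w₀, A₁, A₂, A₃ as above, and let g₂, g₃ be the quadrinvariant and cubinvariant of f. Suppose p : U → ℂ is differentiable on an open set U ⊆ ℂ with (p')² = 4p³ − g₂p − g₃, and define w = w₀ + (f'(w₀)/4)/(p − f''(w₀)/24) on the set where p ≠ f''(w₀)/24. Then (w')² = f(w). -/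
theorem aux_cancel (d1 d2 d3 d4 c Q : ℂ) (hq : Q ≠ 0) :
    (d1 * c * Q^3 + d2 * c^2 * Q^2 + d3 * c^3 * Q + d4 * c^4) / Q^4
      = d1 * (c / Q) + d2 * (c / Q)^2 + d3 * (c / Q)^3 + d4 * (c / Q)^4 := by
  rw [div_eq_iff (pow_ne_zero 4 hq)]
  have h1 : c / Q * Q = c := div_mul_cancel₀ c hq
  linear_combination (-(d1 * Q^3 + d2 * Q^2 * (c/Q*Q + c)
    + d3 * Q * ((c/Q)^2*Q^2 + (c/Q)*Q*c + c^2)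
    + d4 * ((c/Q)^3*Q^3 + (c/Q)^2*Q^2*c + (c/Q)*Q*c^2 + c^3))) * h1

set_option maxHeartbeats 2000000 in
theorem stmt_16 (a₀ a₁ a₂ a₃ a₄ w₀ : ℂ)
    (f : ℂ → ℂ)
    (hf : f = fun w => a₀ * w^4 + 4 * a₁ * w^3 + 6 * a₂ * w^2 + 4 * a₃ * w + a₄)
    (hroot : f w₀ = 0) (hsimple : deriv f w₀ ≠ 0)
    (g₂ g₃ : ℂ)
    (hg₂ : g₂ = a₀ * a₄ - 4 * a₁ * a₃ + 3 * a₂^2)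
    (hg₃ : g₃ = a₀ * a₂ * a₄ + 2 * a₁ * a₂ * a₃ - a₂^3 - a₀ * a₃^2 - a₁^2 * a₄)
    (U : Set ℂ) (hU : IsOpen U) (p : ℂ → ℂ)
    (hp : ∀ z ∈ U, DifferentiableAt ℂ p z)
    (hpne : ∀ z ∈ U, p z ≠ iteratedDeriv 2 f w₀ / 24)
    (hpode : ∀ z ∈ U, (deriv p z) ^ 2 = 4 * (p z)^3 - g₂ * p z - g₃)
    (w : ℂ → ℂ)
    (hw : w = fun z => w₀ + (deriv f w₀ / 4) / (p z - iteratedDeriv 2 f w₀ / 24)) :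
    ∀ z ∈ U, (deriv w z) ^ 2 = f (w z) := by
  -- first derivative of f
  have key : ∀ x : ℂ, HasDerivAt f (4*a₀*x^3 + 12*a₁*x^2 + 12*a₂*x + 4*a₃) x := by
    intro x
    rw [hf]
    have h := (((((hasDerivAt_pow 4 x).const_mul a₀).add
      ((hasDerivAt_pow 3 x).const_mul (4*a₁))).add
      ((hasDerivAt_pow 2 x).const_mul (6*a₂))).add
      ((hasDerivAt_id x).const_mul (4*a₃))).add_const a₄
    refine (show HasDerivAt (fun w => a₀ * w^4 + 4 * a₁ * w^3 + 6 * a₂ * w^2 + 4 * a₃ * w + a₄) _ x from h).congr_deriv ?_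
    push_cast
    ring
  have hdf : deriv f = fun x => 4*a₀*x^3 + 12*a₁*x^2 + 12*a₂*x + 4*a₃ := by
    funext x; exact (key x).deriv
  have key2 : ∀ x : ℂ, HasDerivAt (deriv f) (12*a₀*x^2 + 24*a₁*x + 12*a₂) x := by
    intro x
    rw [hdf]
    have h := ((((hasDerivAt_pow 3 x).const_mul (4*a₀)).add
      ((hasDerivAt_pow 2 x).const_mul (12*a₁))).add
      ((hasDerivAt_id x).const_mul (12*a₂))).add_const (4*a₃)
    refine (show HasDerivAt (fun x => 4*a₀*x^3 + 12*a₁*x^2 + 12*a₂*x + 4*a₃) _ x from h).congr_deriv ?_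
    push_cast
    ring
  have hA : deriv f w₀ = 4*a₀*w₀^3 + 12*a₁*w₀^2 + 12*a₂*w₀ + 4*a₃ := (key w₀).deriv
  have hB : iteratedDeriv 2 f w₀ = 12*a₀*w₀^2 + 24*a₁*w₀ + 12*a₂ := by
    rw [show (2:ℕ) = 1 + 1 from rfl, iteratedDeriv_succ, iteratedDeriv_one]
    exact (key2 w₀).deriv
  have ha₄ : a₄ = -(a₀*w₀^4 + 4*a₁*w₀^3 + 6*a₂*w₀^2 + 4*a₃*w₀) := by
    rw [hf] at hroot
    simp only [] at hroot
    linear_combination hroot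
  intro z hz
  have hq : p z - iteratedDeriv 2 f w₀ / 24 ≠ 0 := sub_ne_zero.mpr (hpne z hz)
  set Q : ℂ := p z - iteratedDeriv 2 f w₀ / 24 with hQ
  have hw' : HasDerivAt w
      ((0 * Q - deriv f w₀ / 4 * deriv p z) / Q ^ 2) z := by
    rw [hw]
    exact ((hasDerivAt_const z (deriv f w₀ / 4)).div
      (((hp z hz).hasDerivAt).sub_const _) hq).const_add w₀
  have hdw : deriv w z = -(deriv f w₀ / 4 * deriv p z) / Q ^ 2 := by
    rw [hw'.deriv]; ring
  have hwz : w z = w₀ + (deriv f w₀ / 4) / Q := by rw [hw]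
  have hsq : (deriv w z) ^ 2 = (deriv f w₀ / 4)^2 * (4 * (p z)^3 - g₂ * p z - g₃) / Q ^ 4 := by
    rw [hdw, ← hpode z hz]
    field_simp
  have hQval : p z = Q + (12*a₀*w₀^2 + 24*a₁*w₀ + 12*a₂) / 24 := by rw [hQ, hB]; ring
  rw [hf] at hA
  rw [hsq, hwz, hf]
  simp only []
  rw [hA, hg₂, hg₃, hQval, ha₄]
  trans ((4*a₀*w₀^3 + 12*a₁*w₀^2 + 12*a₂*w₀ + 4*a₃) *
      ((4*a₀*w₀^3 + 12*a₁*w₀^2 + 12*a₂*w₀ + 4*a₃)/4) * Q^3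
      + ((12*a₀*w₀^2 + 24*a₁*w₀ + 12*a₂)/2) *
        ((4*a₀*w₀^3 + 12*a₁*w₀^2 + 12*a₂*w₀ + 4*a₃)/4)^2 * Q^2
      + ((24*a₀*w₀ + 24*a₁)/6) *
        ((4*a₀*w₀^3 + 12*a₁*w₀^2 + 12*a₂*w₀ + 4*a₃)/4)^3 * Q
      + a₀ * ((4*a₀*w₀^3 + 12*a₁*w₀^2 + 12*a₂*w₀ + 4*a₃)/4)^4) / Q^4
  · congr 1
    ring
  · rw [aux_cancel _ _ _ _ _ _ hq]
    ring
end

section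
/- Let κ ∈ (0,1), λ = √(1−κ²). Suppose p : U → ℂ is differentiable with (p')² = 4p³ − g₂p − g₃ where g₂ = (3λ²+1)/3, g₃ = (9λ²−1)/27, and p + 1/3 nonvanishing on U. Then d := 1 − (κ²/2)/(p + 1/3) satisfies (d')² = 2(1 − d)(d² − λ²). -/
/-!
With `q = p + 1/3` the Weierstrass cubic factors as `q'² = q (4q² − 4q + κ²)`, because `−1/3` is one
of its roots. The Möbius substitution `d = 1 − (κ²/2)/q` sends this root to `d = ∞` and `q = ∞` to
`d = 1`, so `d` again solves a cubic equation, whose roots are `1` and `±λ`.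
-/

theorem sq_deriv_one_sub_div_of_sq_deriv_eq {𝕜 : Type*} [NontriviallyNormedField 𝕜]
    {q : 𝕜 → 𝕜} {z : 𝕜} (c : 𝕜) (hq : DifferentiableAt 𝕜 q z) (hq0 : q z ≠ 0)
    (hode : deriv q z ^ 2 = q z * (4 * q z ^ 2 - 4 * q z + 2 * c)) :
    deriv (fun w => 1 - c / q w) z ^ 2 =
      2 * (1 - (1 - c / q z)) * ((1 - c / q z) ^ 2 - (1 - 2 * c)) := by
  have hderiv : deriv (fun w => 1 - c / q w) z = c * deriv q z / q z ^ 2 := by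
    rw [deriv_const_sub, deriv_const_div c hq hq0]
    ring
  rw [hderiv, div_pow, mul_pow, hode]
  field_simp
  ring

theorem stmt_17_general (κ : ℝ) (hκ : κ ∈ Set.Ioo (0:ℝ) 1) (l : ℝ) (hl : l = Real.sqrt (1 - κ^2))
    (g₂ g₃ : ℂ) (hg₂ : g₂ = (3 * (l:ℂ)^2 + 1) / 3) (hg₃ : g₃ = (9 * (l:ℂ)^2 - 1) / 27)
    (U : Set ℂ) (p : ℂ → ℂ)
    (hp : ∀ z ∈ U, DifferentiableAt ℂ p z)
    (hpne : ∀ z ∈ U, p z + 1/3 ≠ 0)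
    (hpode : ∀ z ∈ U, (deriv p z) ^ 2 = 4 * (p z)^3 - g₂ * p z - g₃)
    (d : ℂ → ℂ) (hd : d = fun z => 1 - ((κ:ℂ)^2 / 2) / (p z + 1/3)) :
    ∀ z ∈ U, (deriv d z) ^ 2 = 2 * (1 - d z) * ((d z)^2 - (l:ℂ)^2) := by
  intro z hz
  have hl2 : (l : ℂ) ^ 2 = 1 - 2 * ((κ : ℂ) ^ 2 / 2) := by
    have : l ^ 2 = 1 - κ ^ 2 := by
      rw [hl, Real.sq_sqrt]
      nlinarith [hκ.1, hκ.2]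
    rw [← Complex.ofReal_pow, this]
    push_cast
    ring
  have hode : deriv (fun w => p w + 1/3) z ^ 2 =
      (p z + 1/3) * (4 * (p z + 1/3) ^ 2 - 4 * (p z + 1/3) + 2 * ((κ : ℂ) ^ 2 / 2)) := by
    rw [deriv_add_const, hpode z hz, hg₂, hg₃, hl2]
    ring
  subst hd
  rw [hl2]
  exact sq_deriv_one_sub_div_of_sq_deriv_eq _ ((hp z hz).add_const _) (hpne z hz) hode

theorem stmt_17 (κ : ℝ) (hκ : κ ∈ Set.Ioo (0:ℝ) 1) (l : ℝ) (hl : l = Real.sqrt (1 - κ^2))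
    (g₂ g₃ : ℂ) (hg₂ : g₂ = (3 * (l:ℂ)^2 + 1) / 3) (hg₃ : g₃ = (9 * (l:ℂ)^2 - 1) / 27)
    (U : Set ℂ) (hU : IsOpen U) (p : ℂ → ℂ)
    (hp : ∀ z ∈ U, DifferentiableAt ℂ p z)
    (hpne : ∀ z ∈ U, p z + 1/3 ≠ 0)
    (hpode : ∀ z ∈ U, (deriv p z) ^ 2 = 4 * (p z)^3 - g₂ * p z - g₃)
    (d : ℂ → ℂ) (hd : d = fun z => 1 - ((κ:ℂ)^2 / 2) / (p z + 1/3)) :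
    ∀ z ∈ U, (deriv d z) ^ 2 = 2 * (1 - d z) * ((d z)^2 - (l:ℂ)^2) :=
  stmt_17_general κ hκ l hl g₂ g₃ hg₂ hg₃ U p hp hpne hpode d hd
end

section
/- Let κ ∈ (0,1), λ = √(1−κ²), μ⁺ = √((1+κ)/2). Suppose P : U → ℂ is differentiable with (P')² = 4P³ − G₂P − G₃ where G₂ = 16(1+3λ²)/3, G₃ = 64(1−9λ²)/27, and P − (4/3 + 2κ) nonvanishing on U. Then y := μ⁺·(1 + 4κ/(P − (4/3 + 2κ))) satisfies (y')² = 8y⁴ − 8y² + 2λ². -/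
/-!
The cubic `4p³ - G₂p - G₃` factors as `4(p - 4/3)((p + 2/3)² - 4λ²)`. The Möbius map
`p ↦ μ⁺(1 + 4κ/(p - (4/3 + 2κ)))` sends its branch points `∞, 4/3, -2/3 ± 2λ` to the four roots
`±μ⁺, ±√((1 - κ)/2)` of `8y⁴ - 8y² + 2λ²`, and the non-branch point `4/3 + 2κ` to `∞`, so it
carries the cubic curve onto the quartic one. Concretely, with `Q = P - (4/3 + 2κ)` the claim is
a polynomial identity in `Q`, `P'` and `κ` once `μ⁺² = (1 + κ)/2` and `λ² = 1 - κ²` are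
substituted.
-/

theorem HasDerivAt.const_mul_one_add_div_sub {𝕜 : Type*} [NontriviallyNormedField 𝕜]
    {f : 𝕜 → 𝕜} {f' z : 𝕜} (a b c : 𝕜) (hf : HasDerivAt f f' z) (hfz : f z - c ≠ 0) :
    HasDerivAt (fun w => a * (1 + b / (f w - c))) (a * (b * (-f' / (f z - c) ^ 2))) z := by
  have h := (((hf.sub_const c).inv hfz).const_mul b |>.const_add 1).const_mul a
  simp only [div_eq_mul_inv] at h ⊢
  exact h

lemma weierstrass_cubic_eq_mul (l p : ℂ) :
    4 * p ^ 3 - 16 * (1 + 3 * l ^ 2) / 3 * p - 64 * (1 - 9 * l ^ 2) / 27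
      = 4 * (p - 4/3) * ((p + 2/3) ^ 2 - 4 * l ^ 2) := by
  ring

lemma mobius_sq_eq_quartic {κ μ l Q Q' : ℂ} (hμ : μ ^ 2 = (1 + κ) / 2) (hl : l ^ 2 = 1 - κ ^ 2)
    (hQ : Q ≠ 0) (hQ' : Q' ^ 2 = 4 * (Q + 2 * κ) * ((Q + 2 + 2 * κ) ^ 2 - 4 * l ^ 2)) :
    (μ * (4 * κ * (-Q' / Q ^ 2))) ^ 2
      = 8 * (μ * (1 + 4 * κ / Q)) ^ 4 - 8 * (μ * (1 + 4 * κ / Q)) ^ 2 + 2 * l ^ 2 := by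
  rw [hl] at hQ' ⊢
  simp only [mul_pow, show μ ^ 4 = (μ ^ 2) ^ 2 by ring, hμ]
  field_simp
  linear_combination 32 * κ ^ 2 * (1 + κ) * hQ'

theorem stmt_18_general (κ : ℝ) (hκ : κ ∈ Set.Ioo (0:ℝ) 1) (l : ℝ) (hl : l = Real.sqrt (1 - κ^2))
    (μp : ℝ) (hμp : μp = Real.sqrt ((1 + κ)/2))
    (G₂ G₃ : ℂ) (hG₂ : G₂ = 16 * (1 + 3 * (l:ℂ)^2) / 3)
    (hG₃ : G₃ = 64 * (1 - 9 * (l:ℂ)^2) / 27)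
    (U : Set ℂ) (P : ℂ → ℂ)
    (hP : ∀ z ∈ U, DifferentiableAt ℂ P z)
    (hPne : ∀ z ∈ U, P z - (4/3 + 2 * (κ:ℂ)) ≠ 0)
    (hPode : ∀ z ∈ U, (deriv P z) ^ 2 = 4 * (P z)^3 - G₂ * P z - G₃)
    (y : ℂ → ℂ)
    (hy : y = fun z => (μp:ℂ) * (1 + 4 * (κ:ℂ) / (P z - (4/3 + 2 * (κ:ℂ))))) :
    ∀ z ∈ U, (deriv y z) ^ 2 = 8 * (y z)^4 - 8 * (y z)^2 + 2 * (l:ℂ)^2 := by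
  intro z hz
  obtain ⟨hκ0, hκ1⟩ := hκ
  have hl2 : (l : ℂ) ^ 2 = 1 - (κ : ℂ) ^ 2 := by
    rw [← Complex.ofReal_pow, hl, Real.sq_sqrt (by nlinarith)]; push_cast; ring
  have hμ2 : (μp : ℂ) ^ 2 = (1 + (κ : ℂ)) / 2 := by
    rw [← Complex.ofReal_pow, hμp, Real.sq_sqrt (by linarith)]; push_cast; ring
  have hode : deriv P z ^ 2 = 4 * (P z - (4/3 + 2 * κ) + 2 * κ)
      * ((P z - (4/3 + 2 * κ) + 2 + 2 * κ) ^ 2 - 4 * l ^ 2) := by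
    rw [hPode z hz, hG₂, hG₃, weierstrass_cubic_eq_mul]; ring
  subst hy
  rw [((hP z hz).hasDerivAt.const_mul_one_add_div_sub _ _ _ (hPne z hz)).deriv]
  exact mobius_sq_eq_quartic hμ2 hl2 (hPne z hz) hode

theorem stmt_18 (κ : ℝ) (hκ : κ ∈ Set.Ioo (0:ℝ) 1) (l : ℝ) (hl : l = Real.sqrt (1 - κ^2))
    (μp : ℝ) (hμp : μp = Real.sqrt ((1 + κ)/2))
    (G₂ G₃ : ℂ) (hG₂ : G₂ = 16 * (1 + 3 * (l:ℂ)^2) / 3)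
    (hG₃ : G₃ = 64 * (1 - 9 * (l:ℂ)^2) / 27)
    (U : Set ℂ) (hU : IsOpen U) (P : ℂ → ℂ)
    (hP : ∀ z ∈ U, DifferentiableAt ℂ P z)
    (hPne : ∀ z ∈ U, P z - (4/3 + 2 * (κ:ℂ)) ≠ 0)
    (hPode : ∀ z ∈ U, (deriv P z) ^ 2 = 4 * (P z)^3 - G₂ * P z - G₃)
    (y : ℂ → ℂ)
    (hy : y = fun z => (μp:ℂ) * (1 + 4 * (κ:ℂ) / (P z - (4/3 + 2 * (κ:ℂ))))) :
    ∀ z ∈ U, (deriv y z) ^ 2 = 8 * (y z)^4 - 8 * (y z)^2 + 2 * (l:ℂ)^2 :=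
  stmt_18_general κ hκ l hl μp hμp G₂ G₃ hG₂ hG₃ U P hP hPne hPode y hy
end
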